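/- For a pure k-dimensional simplicial complex X, the independence number satisfies α(X) ≤ ϑ_k(X), where ϑ_k(X) is the optimal value of the semidefinite program maximizing ⟨L↓_{k-1}, Y⟩ over positive semidefinite matrices Y indexed by k-subsets of V with trace(Y) = 1, Y_{F,F'} = 0 if F ∪ F' ∈ X_k, Y_{F,F'} = 0 if |F ∪ F'| ≥ k+2, and ε_{F,F'}Y_{F,F'} = ε_{F'',F†}Y_{F'',F†} whenever F ∪ F' = F'' ∪ F†. -/

import Mathlib

open Finset Matrix

/-- The oriented incidence number `[F:K]` induced by the global linear order on
the vertices: it is `(-1)^j` if `K ⊆ F`, `F ∖ K = {x_j}` and `x_j` is the `j`-th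
smallest element of `F`, and `0` otherwise. -/
def inc {V : Type} [DecidableEq V] [LinearOrder V] (F K : Finset V) : ℝ :=
  if K ⊆ F ∧ F.card = K.card + 1 then
    ∑ x ∈ F \ K, (-1 : ℝ) ^ (K.filter (fun y => y < x)).card
  else 0

/-- An abstract simplicial complex on a vertex type `V`: a family of finite subsets
of `V` closed under taking subsets. -/
structure SC (V : Type) [DecidableEq V] where
  faces : Finset (Finset V)
  down_closed : ∀ ⦃F⦄, F ∈ faces → ∀ ⦃K : Finset V⦄, K ⊆ F → K ∈ faces

variable {V : Type} [Fintype V] [DecidableEq V] [LinearOrder V]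

/-- The faces of cardinality `m` (i.e. of dimension `m-1`) of a complex. -/
def SC.dfaces (X : SC V) (m : ℕ) : Finset (Finset V) := X.faces.filter fun F => F.card = m

/-- The faces of cardinality `m`, as a type (index set of the space `C^{m-1}` of
`(m-1)`-dimensional cochains). -/
abbrev Face (X : SC V) (m : ℕ) := {F : Finset V // F ∈ X.dfaces m}

/-- The matrix of the coboundary map `δ_{m-1}` from `(m-1)`-dimensional cochains
(functions on cardinality-`m` faces) to `m`-dimensional cochains, in the bases of
elementary cochains. -/
def deltaMat (X : SC V) (m : ℕ) : Matrix (Face X (m + 1)) (Face X m) ℝ :=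
  fun H F => inc H.1 F.1

/-- The up-Laplacian `L↑_{m-1} = ∂_m δ_{m-1}` acting on `(m-1)`-dimensional cochains,
where `∂ = δ*` is the adjoint (transpose) of the coboundary map. -/
def Lup (X : SC V) (m : ℕ) : Matrix (Face X m) (Face X m) ℝ :=
  (deltaMat X m)ᵀ * deltaMat X m

/-- The down-Laplacian `L↓_m = δ_{m-1} ∂_m` acting on `m`-dimensional cochains. -/
def Ldown (X : SC V) (m : ℕ) : Matrix (Face X (m + 1)) (Face X (m + 1)) ℝ :=
  deltaMat X m * (deltaMat X m)ᵀ

/-- The space of harmonicSp `i`-cochains `H_i = Z_i ∩ Z^i = ker ∂_i ∩ ker δ_i`. -/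
def harmonicSp (X : SC V) (i : ℕ) : Submodule ℝ (Face X (i + 1) → ℝ) :=
  LinearMap.ker (Matrix.mulVecLin (deltaMat X i)ᵀ) ⊓
    LinearMap.ker (Matrix.mulVecLin (deltaMat X (i + 1)))

/-- The type of all `k`-element subsets of `V`. -/
abbrev KSet (V : Type) [Fintype V] [DecidableEq V] (k : ℕ) := {F : Finset V // F.card = k}

/-- `ε_{F,F'} = [F : F ∩ F'] ⬝ [F' : F ∩ F']`. -/
def eps {V : Type} [DecidableEq V] [LinearOrder V] (F F' : Finset V) : ℝ :=
  inc F (F ∩ F') * inc F' (F ∩ F')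

/-- The down-Laplacian `L↓_{k-1}` of the complete complex `K_n^k`, as a matrix indexed
by all `k`-subsets of the vertex set: diagonal entries `k`, off-diagonal entries
`ε_{F,F'}` (which vanish unless `|F ∩ F'| = k-1`). -/
def Lc (V : Type) [Fintype V] [DecidableEq V] [LinearOrder V] (k : ℕ) :
    Matrix (KSet V k) (KSet V k) ℝ :=
  fun F F' => if F = F' then (k : ℝ) else eps F.1 F'.1

/-- `S` is an independent set of the pure `k`-dimensional complex `X`: it contains
no `k`-dimensional face of `X`. -/
def SC.IsIndep (X : SC V) (k : ℕ) (S : Finset V) : Prop :=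
  ∀ H ∈ X.dfaces (k + 1), ¬ H ⊆ S

/-- The independence number `α(X)` of a pure `k`-dimensional complex. -/
noncomputable def alphaNum (X : SC V) (k : ℕ) : ℕ :=
  sSup {m | ∃ S : Finset V, X.IsIndep k S ∧ S.card = m}

/-- `X` is a pure `k`-dimensional simplicial complex: all faces have dimension at
most `k` and every face is contained in a face of dimension `k`. -/
def SC.Pure (X : SC V) (k : ℕ) : Prop :=
  (∀ F ∈ X.faces, F.card ≤ k + 1) ∧ ∀ F ∈ X.faces, ∃ H ∈ X.dfaces (k + 1), F ⊆ H

/-- Feasibility for the primal semidefinite program defining `ϑ_k(X)`. -/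
def thetaFeasible (X : SC V) (k : ℕ) (Y : Matrix (KSet V k) (KSet V k) ℝ) : Prop :=
  Y.PosSemidef ∧ Matrix.trace Y = 1 ∧
  (∀ F F' : KSet V k, F.1 ∪ F'.1 ∈ X.dfaces (k + 1) → Y F F' = 0) ∧
  (∀ F F' : KSet V k, k + 2 ≤ (F.1 ∪ F'.1).card → Y F F' = 0) ∧
  (∀ F F' G G' : KSet V k, F.1 ∪ F'.1 = G.1 ∪ G'.1 →
    eps F.1 F'.1 * Y F F' = eps G.1 G'.1 * Y G G')

/-- The theta number `ϑ_k(X)` of a pure `k`-dimensional simplicial complex: the optimal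
value of the semidefinite program maximizing `⟨L↓_{k-1}, Y⟩` over feasible `Y`. -/
noncomputable def theta (X : SC V) (k : ℕ) : ℝ :=
  sSup {t | ∃ Y, thetaFeasible X k Y ∧ Matrix.trace (Lc V k * Y) = t}

/-- The complete `k`-dimensional complex on the vertex type `V`: all subsets of
cardinality at most `k+1` are faces. -/
def completeComplex (V : Type) [Fintype V] [DecidableEq V] (k : ℕ) : SC V :=
  ⟨univ.filter fun F => F.card ≤ k + 1, by
    intro F hF K hK
    simp only [mem_filter, mem_univ, true_and] at hF ⊢
    exact le_trans (card_le_card hK) hF⟩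

/-- The empty complex (no faces at all), conventionally pure of any dimension. -/
def emptyComplex (V : Type) [DecidableEq V] : SC V :=
  ⟨∅, by intro F hF; simp at hF⟩

/-- The largest eigenvalue of a matrix. -/
noncomputable def lambdaMax {ι : Type} [Fintype ι] (M : Matrix ι ι ℝ) : ℝ :=
  sSup {μ : ℝ | Module.End.HasEigenvalue (Matrix.mulVecLin M) μ}

/-- The smallest eigenvalue of a matrix. -/
noncomputable def lambdaMin {ι : Type} [Fintype ι] (M : Matrix ι ι ℝ) : ℝ :=
  sInf {μ : ℝ | Module.End.HasEigenvalue (Matrix.mulVecLin M) μ}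

/-- The degree of a face `F`: the number of faces of one higher dimension containing it. -/
def SC.deg (X : SC V) (F : Finset V) : ℕ :=
  ((X.dfaces (F.card + 1)).filter fun H => F ⊆ H).card

/-- The minimal degree of a `(k-1)`-dimensional face (a face of cardinality `k`). -/
noncomputable def degMin (X : SC V) (k : ℕ) : ℕ :=
  sInf {m | ∃ F ∈ X.dfaces k, m = X.deg F}

/-- The up-Laplacian `L↑_{k-1}(X)` extended by zeros to a matrix indexed by all
`k`-subsets of the vertex set. -/
def LupE (X : SC V) (k : ℕ) : Matrix (KSet V k) (KSet V k) ℝ :=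
  fun F F' => ∑ H ∈ X.dfaces (k + 1), inc H F.1 * inc H F'.1

/-- The down-Laplacian `L↓_{k-1}(X)` extended by zeros to a matrix indexed by all
`k`-subsets of the vertex set. -/
def LdownE (X : SC V) (k : ℕ) : Matrix (KSet V k) (KSet V k) ℝ :=
  fun F F' =>
    if F.1 ∈ X.faces ∧ F'.1 ∈ X.faces then ∑ K ∈ X.dfaces (k - 1), inc F.1 K * inc F'.1 K
    else 0

/-- The Lovász theta number of a graph given by an adjacency relation `adj` on a finite
vertex type, in its primal formulation. -/
noncomputable def thetaG {W : Type} [Fintype W] (adj : W → W → Prop) : ℝ :=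
  sSup {t | ∃ Z : Matrix W W ℝ, Z.PosSemidef ∧ Matrix.trace Z = 1 ∧
    (∀ v w, adj v w → Z v w = 0) ∧ t = ∑ v, ∑ w, Z v w}

/-!
Let `S` be a maximum independent set, `s = |S|`. The matrix `Y^S`, equal to `L↓_{k-1}(K_n^k)` on
pairs of `k`-subsets of `S` and zero elsewhere, is positive semidefinite because
`L↓_{k-1}(K_n^k)` is the Gram matrix of the incidence numbers `[F : K]`. Since
`ε_{F,F'}² = 1` exactly when `|F ∪ F'| = k + 1`, the product `ε_{F,F'} Y^S_{F,F'}` is the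
indicator of "`F ∪ F'` is a `k`-face inside `S`", which depends only on `F ∪ F'` and vanishes on
faces of `X` because `S` is independent. Finally `tr Y^S = k·C(s,k)` and
`⟨L↓, Y^S⟩ = Σ_{F,F' ⊆ S} L↓_{F,F'}² = C(s,k)·(k² + k(s-k))`, each `k`-subset of `S` having
`k(s-k)` neighbours in `S`; so `Y^S / (k·C(s,k))` is feasible with value `s`.
-/

namespace Matrix.PosSemidef

variable {ι : Type*} [Fintype ι] {Y : Matrix ι ι ℝ}

theorem two_mul_abs_apply_le (hY : Y.PosSemidef) (i j : ι) :
    2 * |Y i j| ≤ Y i i + Y j j := by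
  classical
  have hsymm : Y j i = Y i j := by simpa using congrFun (congrFun hY.isHermitian i) j
  have quad (t : ℝ) : 0 ≤ Y i i + t * (Y i j + Y j i) + t ^ 2 * Y j j := by
    have h := hY.dotProduct_mulVec_nonneg (Pi.single i 1 + Pi.single j t)
    simp only [star_trivial, mulVec_add, mulVec_single, dotProduct_add, add_dotProduct,
      single_dotProduct, Pi.smul_apply, col_apply, MulOpposite.op_one, one_smul, one_mul,
      MulOpposite.smul_eq_mul_unop, MulOpposite.unop_op] at h
    linear_combination h
  have h₁ := quad 1
  have h₂ := quad (-1)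
  rcases abs_cases (Y i j) with ⟨h, -⟩ | ⟨h, -⟩ <;> linarith

theorem apply_le_trace (hY : Y.PosSemidef) (i : ι) : Y i i ≤ Y.trace :=
  single_le_sum (f := fun j => Y j j) (fun _ _ => hY.diag_nonneg) (mem_univ i)

theorem abs_apply_le_trace (hY : Y.PosSemidef) (i j : ι) : |Y i j| ≤ Y.trace := by
  linarith [hY.two_mul_abs_apply_le i j, hY.apply_le_trace i, hY.apply_le_trace j]

theorem trace_mul_le (hY : Y.PosSemidef) (A : Matrix ι ι ℝ) :
    (A * Y).trace ≤ (∑ i, ∑ j, |A i j|) * Y.trace := by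
  rw [sum_mul, trace]
  refine sum_le_sum fun i _ => ?_
  rw [diag_apply, mul_apply, sum_mul]
  refine sum_le_sum fun j _ => ?_
  calc A i j * Y j i ≤ |A i j| * |Y j i| := by rw [← abs_mul]; exact le_abs_self _
    _ ≤ |A i j| * Y.trace := by gcongr; exact hY.abs_apply_le_trace j i

end Matrix.PosSemidef

theorem Finset.card_filter_card_union_eq_succ {α : Type*} [DecidableEq α] {k : ℕ}
    {F S : Finset α} (hk : 1 ≤ k) (hFS : F ⊆ S) (hF : F.card = k) :
    ((S.powersetCard k).filter fun G => (F ∪ G).card = k + 1).card = k * (S.card - k) := by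
  obtain ⟨m, rfl⟩ : ∃ m, k = m + 1 := ⟨k - 1, by omega⟩
  symm
  -- `G` is split as `(G ∩ F) ∪ (G \ F)`, with `G \ F` a single vertex of `S \ F`
  calc (m + 1) * (S.card - (m + 1))
      = ((F.powersetCard m) ×ˢ ((S \ F).powersetCard 1)).card := by
        rw [card_product, card_powersetCard, card_powersetCard, card_sdiff_of_subset hFS, hF,
          Nat.choose_one_right, Nat.choose_succ_self_right]
    _ = _ := by
      refine card_bij' (fun p _ => p.1 ∪ p.2) (fun G _ => (G ∩ F, G \ F)) ?_ ?_ ?_ ?_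
      · rintro ⟨A, B⟩ hAB
        simp only [mem_product, mem_powersetCard, subset_sdiff] at hAB
        obtain ⟨⟨hAF, hA⟩, ⟨hBS, hBF⟩, hB⟩ := hAB
        have hFAB : F ∪ (A ∪ B) = F ∪ B := by rw [← union_assoc, union_eq_left.mpr hAF]
        simp only [mem_filter, mem_powersetCard]
        refine ⟨⟨union_subset (hAF.trans hFS) hBS, ?_⟩, ?_⟩
        · rw [card_union_of_disjoint (hBF.symm.mono_left hAF), hA, hB]
        · rw [hFAB, card_union_of_disjoint hBF.symm, hF, hB]
      · intro G hG
        simp only [mem_filter, mem_powersetCard] at hG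
        obtain ⟨⟨hGS, hG⟩, hFG⟩ := hG
        have h₁ := card_union_add_card_inter F G
        have h₂ := card_sdiff_add_card_inter G F
        rw [inter_comm] at h₁
        simp only [mem_product, mem_powersetCard]
        refine ⟨⟨inter_subset_right, by omega⟩, sdiff_subset_sdiff hGS le_rfl, by omega⟩
      · rintro ⟨A, B⟩ hAB
        simp only [mem_product, mem_powersetCard, subset_sdiff] at hAB
        obtain ⟨⟨hAF, -⟩, ⟨-, hBF⟩, -⟩ := hAB
        dsimp only
        rw [union_inter_distrib_right, union_sdiff_distrib, inter_eq_left.mpr hAF,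
          disjoint_iff_inter_eq_empty.mp hBF, sdiff_eq_empty_iff_subset.mpr hAF,
          sdiff_eq_self_of_disjoint hBF, union_empty, empty_union]
      · intro G _
        exact sup_inf_sdiff G F

section Incidence

variable {V : Type} [DecidableEq V] [LinearOrder V] {k : ℕ} {F F' K : Finset V}

theorem inc_eq_zero (h : ¬(K ⊆ F ∧ F.card = K.card + 1)) : inc F K = 0 := if_neg h

theorem inc_mul_self (hKF : K ⊆ F) (hcard : F.card = K.card + 1) : inc F K * inc F K = 1 := by
  obtain ⟨x, hx⟩ := card_eq_one.mp (show (F \ K).card = 1 by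
    rw [card_sdiff_of_subset hKF]; omega)
  rw [inc, if_pos ⟨hKF, hcard⟩, hx, sum_singleton, ← pow_add, ← two_mul, pow_mul]
  norm_num

theorem eps_mul_self (hF : F.card = k) (hF' : F'.card = k) :
    eps F F' * eps F F' = if (F ∪ F').card = k + 1 then 1 else 0 := by
  have hcard := card_inter_add_card_union F F'
  split_ifs with h
  · rw [eps, mul_mul_mul_comm, inc_mul_self inter_subset_left (by omega),
      inc_mul_self inter_subset_right (by omega), one_mul]
  · rw [eps, inc_eq_zero (by omega), zero_mul, zero_mul]

theorem eps_eq_zero_of_card_union_ne (hF : F.card = k) (hF' : F'.card = k)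
    (h : (F ∪ F').card ≠ k + 1) : eps F F' = 0 :=
  mul_self_eq_zero.mp ((eps_mul_self hF hF').trans (if_neg h))

end Incidence

section KSet

variable {k : ℕ}

theorem sum_KSet_ite_subset {V : Type} [Fintype V] [DecidableEq V] (S : Finset V)
    (f : Finset V → ℝ) :
    ∑ F : KSet V k, (if F.1 ⊆ S then f F.1 else 0) = ∑ F ∈ S.powersetCard k, f F := by
  rw [← sum_subtype (univ.powersetCard k) (fun _ => mem_powersetCard_univ)
    (fun F => if F ⊆ S then f F else 0), ← sum_filter]
  congr 1
  ext G
  simp only [mem_filter, mem_powersetCard, subset_univ, true_and]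
  exact and_comm

theorem Lc_apply_eq_sum (hk : 1 ≤ k) (F F' : KSet V k) :
    Lc V k F F' = ∑ K : KSet V (k - 1), inc F.1 K.1 * inc F'.1 K.1 := by
  have hsupp : ∑ K : KSet V (k - 1), inc F.1 K.1 * inc F'.1 K.1
      = ∑ K ∈ (F.1 ∩ F'.1).powersetCard (k - 1), inc F.1 K * inc F'.1 K := by
    rw [← sum_KSet_ite_subset]
    refine sum_congr rfl fun K _ => ?_
    split_ifs with hK
    · rfl
    · rcases not_and_or.mp (mt subset_inter_iff.mpr hK) with h | h
      · rw [inc_eq_zero (fun h' => h h'.1), zero_mul]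
      · rw [inc_eq_zero (fun h' => h h'.1), mul_zero]
  rw [hsupp]
  rcases eq_or_ne F F' with rfl | hne
  · rw [Lc, if_pos rfl, inter_self, sum_congr rfl fun K hK => inc_mul_self
      (mem_powersetCard.mp hK).1 (by rw [(mem_powersetCard.mp hK).2, F.2]; omega),
      sum_const, card_powersetCard, F.2,
      Nat.choose_symm_of_eq_add (show k = k - 1 + 1 by omega), Nat.choose_one_right, nsmul_one]
  · have hne' : F.1 ≠ F'.1 := fun h => hne (Subtype.ext h)
    have hlt : (F.1 ∩ F'.1).card < k := by
      refine (card_lt_card (ssubset_of_subset_of_ne inter_subset_left fun h => hne' ?_)).trans_eq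
        F.2
      exact eq_of_subset_of_card_le (inter_eq_left.mp h) (by rw [F.2, F'.2])
    rw [Lc, if_neg hne]
    rcases (Nat.le_sub_one_of_lt hlt).eq_or_lt with h | h
    · rw [← h, powersetCard_self, sum_singleton, eps]
    · rw [powersetCard_eq_empty.mpr h, sum_empty]
      refine eps_eq_zero_of_card_union_ne F.2 F'.2 ?_
      have := card_inter_add_card_union F.1 F'.1
      omega

theorem Lc_posSemidef (hk : 1 ≤ k) : (Lc V k).PosSemidef := by
  have : Lc V k = (of fun F (K : KSet V (k - 1)) => inc F.1 K.1) *
      (of fun F (K : KSet V (k - 1)) => inc F.1 K.1)ᴴ := by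
    ext F F'
    simp [mul_apply, Lc_apply_eq_sum hk]
  exact this ▸ posSemidef_self_mul_conjTranspose _

theorem Lc_apply_mul_self (F F' : KSet V k) :
    Lc V k F F' * Lc V k F F' =
      (if F = F' then (k : ℝ) * k else 0) + if (F.1 ∪ F'.1).card = k + 1 then 1 else 0 := by
  rcases eq_or_ne F F' with rfl | hne
  · simp [Lc, F.2]
  · rw [Lc, if_neg hne, if_neg hne, zero_add, eps_mul_self F.2 F'.2]

theorem Lc_apply_eq_zero_of_card_union (F F' : KSet V k) (h : k + 2 ≤ (F.1 ∪ F'.1).card) :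
    Lc V k F F' = 0 := by
  have hne : F ≠ F' := by rintro rfl; rw [union_self, F.2] at h; omega
  rw [Lc, if_neg hne, eps_eq_zero_of_card_union_ne F.2 F'.2 (by omega)]

theorem eps_mul_Lc_apply (F F' : KSet V k) :
    eps F.1 F'.1 * Lc V k F F' = if (F.1 ∪ F'.1).card = k + 1 then 1 else 0 := by
  rcases eq_or_ne F F' with rfl | hne
  · rw [union_self, F.2, if_neg (by omega),
      eps_eq_zero_of_card_union_ne F.2 F.2 (by rw [union_self, F.2]; omega), zero_mul]
  · rw [Lc, if_neg hne, eps_mul_self F.2 F'.2]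

def YS (k : ℕ) (S : Finset V) : Matrix (KSet V k) (KSet V k) ℝ :=
  of fun F F' => if F.1 ⊆ S ∧ F'.1 ⊆ S then Lc V k F F' else 0

section YS

variable {S : Finset V}

theorem YS_posSemidef (hk : 1 ≤ k) : (YS k S).PosSemidef := by
  let D : Matrix (KSet V k) (KSet V k) ℝ := diagonal fun F => if F.1 ⊆ S then 1 else 0
  have : YS k S = D * Lc V k * Dᴴ := by
    ext F F'
    by_cases hF : F.1 ⊆ S <;> by_cases hF' : F'.1 ⊆ S <;> simp [YS, D, hF, hF']
  exact this ▸ (Lc_posSemidef hk).mul_mul_conjTranspose_same D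

theorem YS_apply_eq_zero_of_not_subset {F F' : KSet V k} (h : ¬F.1 ∪ F'.1 ⊆ S) :
    YS k S F F' = 0 :=
  if_neg fun hFF' => h (union_subset hFF'.1 hFF'.2)

theorem YS_apply_eq_zero_of_card_union {F F' : KSet V k} (h : k + 2 ≤ (F.1 ∪ F'.1).card) :
    YS k S F F' = 0 := by
  simp [YS, Lc_apply_eq_zero_of_card_union F F' h]

theorem eps_mul_YS_apply (F F' : KSet V k) :
    eps F.1 F'.1 * YS k S F F' =
      if F.1 ∪ F'.1 ⊆ S ∧ (F.1 ∪ F'.1).card = k + 1 then 1 else 0 := by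
  by_cases hS : F.1 ∪ F'.1 ⊆ S
  · simp only [YS, of_apply, ← union_subset_iff, hS, true_and, if_true, eps_mul_Lc_apply]
  · rw [YS_apply_eq_zero_of_not_subset hS, mul_zero, if_neg fun h => hS h.1]

theorem trace_YS : (YS k S).trace = k * S.card.choose k := by
  have hdiag (F : KSet V k) : YS k S F F = if F.1 ⊆ S then (k : ℝ) else 0 := by
    simp [YS, Lc]
  simp only [trace, diag_apply, hdiag]
  rw [sum_KSet_ite_subset S fun _ => (k : ℝ), sum_const, card_powersetCard, nsmul_eq_mul,
    mul_comm]

theorem Lc_mul_YS_apply_self (hk : 1 ≤ k) (F : KSet V k) :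
    (Lc V k * YS k S) F F = if F.1 ⊆ S then (k * S.card : ℝ) else 0 := by
  rw [mul_apply]
  by_cases hF : F.1 ⊆ S
  · have hterm (F' : KSet V k) : Lc V k F F' * YS k S F' F =
        (if F = F' then (k : ℝ) * k else 0) +
          if F'.1 ⊆ S then (if (F.1 ∪ F'.1).card = k + 1 then 1 else 0) else 0 := by
      have hsymm : Lc V k F' F = Lc V k F F' := (Lc_posSemidef hk).isHermitian.apply F F'
      by_cases hF' : F'.1 ⊆ S
      · simp only [YS, of_apply, hF, hF', and_self, if_true, hsymm, Lc_apply_mul_self]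
      · rw [YS_apply_eq_zero_of_not_subset fun h => hF' (subset_union_left.trans h), mul_zero,
          if_neg hF', if_neg (by rintro rfl; exact hF' hF), add_zero]
    have hkS : k ≤ S.card := F.2 ▸ card_le_card hF
    rw [sum_congr rfl fun F' _ => hterm F', sum_add_distrib, sum_ite_eq, if_pos (mem_univ F),
      sum_KSet_ite_subset S fun G => if (F.1 ∪ G).card = k + 1 then (1 : ℝ) else 0, sum_boole,
      card_filter_card_union_eq_succ hk hF F.2, if_pos hF, Nat.cast_mul, Nat.cast_sub hkS]
    ring
  · rw [if_neg hF]
    exact sum_eq_zero fun F' _ => by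
      rw [YS_apply_eq_zero_of_not_subset fun h => hF (subset_union_right.trans h), mul_zero]

theorem trace_Lc_mul_YS (hk : 1 ≤ k) :
    (Lc V k * YS k S).trace = k * S.card * S.card.choose k := by
  simp only [trace, diag_apply, Lc_mul_YS_apply_self hk]
  rw [sum_KSet_ite_subset S fun _ => (k * S.card : ℝ), sum_const, card_powersetCard,
    nsmul_eq_mul, mul_comm]

end YS

theorem cast_mul_choose_pos {k n : ℕ} (hk : 1 ≤ k) (hkn : k ≤ n) :
    (0 : ℝ) < k * n.choose k := by
  have := Nat.choose_pos hkn
  positivity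

theorem thetaFeasible_smul_YS (X : SC V) (hk : 1 ≤ k) {S : Finset V} (hS : X.IsIndep k S)
    (hkS : k ≤ S.card) : thetaFeasible X k ((k * S.card.choose k : ℝ)⁻¹ • YS k S) := by
  have hpos := cast_mul_choose_pos hk hkS
  refine ⟨(YS_posSemidef hk).smul (inv_nonneg.mpr hpos.le), ?_, ?_, ?_, ?_⟩
  · rw [trace_smul, trace_YS, smul_eq_mul, inv_mul_cancel₀ hpos.ne']
  · intro F F' hFF'
    rw [Matrix.smul_apply, YS_apply_eq_zero_of_not_subset fun h => hS _ hFF' h, smul_zero]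
  · intro F F' hcard
    rw [Matrix.smul_apply, YS_apply_eq_zero_of_card_union hcard, smul_zero]
  · intro F F' G G' hunion
    simp only [Matrix.smul_apply, smul_eq_mul, mul_left_comm (eps _ _), eps_mul_YS_apply, hunion]

theorem trace_Lc_mul_smul_YS (hk : 1 ≤ k) {S : Finset V} (hkS : k ≤ S.card) :
    (Lc V k * ((k * S.card.choose k : ℝ)⁻¹ • YS k S)).trace = S.card := by
  have hpos := cast_mul_choose_pos hk hkS
  rw [Matrix.mul_smul, trace_smul, trace_Lc_mul_YS hk, smul_eq_mul, mul_right_comm,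
    inv_mul_cancel_left₀ hpos.ne']

theorem trace_Lc_mul_le_theta {X : SC V} {Y : Matrix (KSet V k) (KSet V k) ℝ}
    (hY : thetaFeasible X k Y) : (Lc V k * Y).trace ≤ theta X k := by
  refine le_csSup ⟨∑ F, ∑ F', |Lc V k F F'|, ?_⟩ ⟨Y, hY, rfl⟩
  rintro t ⟨Z, ⟨hZ, htr, -⟩, rfl⟩
  simpa [htr] using hZ.trace_mul_le (Lc V k)

end KSet

namespace SC

theorem isIndep_of_card_le {V : Type} [DecidableEq V] (X : SC V) {k : ℕ} {S : Finset V}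
    (h : S.card ≤ k) : X.IsIndep k S := fun H hH hHS => by
  have := card_le_card hHS
  rw [(mem_filter.mp hH).2] at this
  omega

variable {V : Type} [Fintype V] [DecidableEq V] (X : SC V) (k : ℕ)

theorem bddAbove_indepCards : BddAbove {m | ∃ S : Finset V, X.IsIndep k S ∧ S.card = m} :=
  ⟨Fintype.card V, by rintro m ⟨S, -, rfl⟩; exact card_le_univ S⟩

theorem exists_isIndep_card_eq_alphaNum : ∃ S, X.IsIndep k S ∧ S.card = alphaNum X k :=
  Nat.sSup_mem (s := {m | ∃ S : Finset V, X.IsIndep k S ∧ S.card = m})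
    ⟨0, ∅, X.isIndep_of_card_le (by simp), card_empty⟩ (X.bddAbove_indepCards k)

theorem le_alphaNum_of_le_card (hkn : k ≤ Fintype.card V) : k ≤ alphaNum X k := by
  obtain ⟨T, -, hT⟩ := exists_subset_card_eq (s := (univ : Finset V)) (by simpa using hkn)
  exact le_csSup (X.bddAbove_indepCards k) ⟨T, X.isIndep_of_card_le hT.le, hT⟩

end SC

theorem alpha_le_theta_general
    {V : Type} [Fintype V] [DecidableEq V] [LinearOrder V] (X : SC V) (k : ℕ)
    (hk : 1 ≤ k) (hkn : k ≤ Fintype.card V) :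
    (alphaNum X k : ℝ) ≤ theta X k := by
  obtain ⟨S, hS, hScard⟩ := X.exists_isIndep_card_eq_alphaNum k
  have hkS : k ≤ S.card := hScard ▸ X.le_alphaNum_of_le_card k hkn
  rw [← hScard, ← trace_Lc_mul_smul_YS hk hkS]
  exact trace_Lc_mul_le_theta (thetaFeasible_smul_YS X hk hS hkS)

/-- For a pure `k`-dimensional simplicial complex `X`, the independence
number is bounded above by the theta number: `α(X) ≤ ϑ_k(X)`. -/
theorem alpha_le_theta
    {V : Type} [Fintype V] [DecidableEq V] [LinearOrder V] (X : SC V) (k : ℕ)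
    (hk : 1 ≤ k) (hkn : k ≤ Fintype.card V) (hpure : X.Pure k) :
    (alphaNum X k : ℝ) ≤ theta X k :=
  alpha_le_theta_general X k hk hkn
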